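/- Let f : X → ℝ∪{±∞} be a proper function. Then for every ε ≥ 0 and every x ∈ X, ∂_{c,ε}f(x) ⊆ ∂_{c,ε}(eco f)(x). -/

import Mathlib

open scoped Pointwise

noncomputable section

variable {X : Type*} [AddCommGroup X] [Module ℝ X] [TopologicalSpace X]

/-- `Wsp X` is the parameter space `X* × X* × ℝ` used in the `c`-conjugation scheme. -/
abbrev Wsp (X : Type*) [AddCommGroup X] [Module ℝ X] [TopologicalSpace X] :=
  (X →L[ℝ] ℝ) × (X →L[ℝ] ℝ) × ℝ

/-- The coupling function `c(x,(x*,y*,α)) = ⟨x,x*⟩` if `⟨x,y*⟩ < α`, `+∞` otherwise. -/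
def coupling (x : X) (w : Wsp X) : EReal :=
  if w.2.1 x < w.2.2 then ((w.1 x : ℝ) : EReal) else ⊤

/-- The `c`-conjugate of `f : X → ℝ∪{±∞}`.  (EReal subtraction gives priority to `-∞`.) -/
def cConj (f : X → EReal) : Wsp X → EReal :=
  fun w => ⨆ x : X, coupling x w - f x

/-- The `c'`-conjugate of `k : W → ℝ∪{±∞}`. -/
def cConj' (k : Wsp X → EReal) : X → EReal :=
  fun x => ⨆ w : Wsp X, coupling x w - k w

/-- Epigraph of an extended-real-valued function, as a subset of `Y × ℝ`. -/
def epiE {Y : Type*} (f : Y → EReal) : Set (Y × ℝ) :=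
  {p | f p.1 ≤ (p.2 : EReal)}

/-- A set `C` is evenly convex (e-convex) if every point outside `C` can be strictly
separated from `C` by a continuous linear functional. -/
def EConvexSet {Y : Type*} [AddCommGroup Y] [Module ℝ Y] [TopologicalSpace Y]
    (C : Set Y) : Prop :=
  ∀ x₀ ∉ C, ∃ φ : Y →L[ℝ] ℝ, ∀ x ∈ C, φ x < φ x₀

/-- A function is e-convex if its epigraph is an e-convex subset of `X × ℝ`. -/
def EConvexFn (f : X → EReal) : Prop := EConvexSet (epiE f)

/-- The e-convex hull of a function: its largest e-convex minorant. -/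
def eco (f : X → EReal) : X → EReal :=
  fun x => ⨆ g : {g : X → EReal // EConvexFn g ∧ g ≤ f}, g.1 x

/-- A function `k : W → ℝ∪{±∞}` is e'-convex if it is the pointwise supremum of a family
of functions of the form `w ↦ c(x,w) - β` with `x ∈ X`, `β ∈ ℝ`. -/
def E'ConvexFn (k : Wsp X → EReal) : Prop :=
  ∃ S : Set (X × ℝ), k = fun w => ⨆ p ∈ S, (coupling p.1 w - ((p.2 : ℝ) : EReal))

/-- The e'-convex hull of a function: its largest e'-convex minorant. -/
def e'co (k : Wsp X → EReal) : Wsp X → EReal :=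
  fun w => ⨆ g : {g : Wsp X → EReal // E'ConvexFn g ∧ g ≤ k}, g.1 w

/-- A subset of `W × ℝ` is e'-convex if it is the epigraph of an e'-convex function. -/
def E'ConvexSet (D : Set (Wsp X × ℝ)) : Prop :=
  ∃ k : Wsp X → EReal, E'ConvexFn k ∧ D = epiE k

/-- The e'-convex hull of a set: the smallest e'-convex set containing it. -/
def e'coSet (D : Set (Wsp X × ℝ)) : Set (Wsp X × ℝ) :=
  ⋂₀ {E : Set (Wsp X × ℝ) | E'ConvexSet E ∧ D ⊆ E}

/-- A function is proper if it never takes the value `-∞` and is not identically `+∞`. -/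
def ProperFn {Y : Type*} (f : Y → EReal) : Prop :=
  (∀ x, f x ≠ ⊥) ∧ ∃ x, f x ≠ ⊤

/-- Convexity of an extended-real-valued function, via convexity of its epigraph. -/
def ConvexFn (f : X → EReal) : Prop := Convex ℝ (epiE f)

open Classical in
/-- Indicator function: `0` on `D`, `+∞` elsewhere. -/
def indicatorE {Y : Type*} (D : Set Y) : Y → EReal :=
  fun x => if x ∈ D then 0 else ⊤

/-- The `ε`-`c`-subdifferential of `f` at `xb`; empty if `f xb ∉ ℝ`. -/
def cSubdiff (f : X → EReal) (ε : ℝ) (xb : X) : Set (Wsp X) :=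
  {w | (∃ r : ℝ, f xb = (r : EReal)) ∧ w.2.1 xb < w.2.2 ∧
    ∀ x : X, coupling x w - coupling xb w - (ε : EReal) ≤ f x - f xb}

/-- The e-affine function with parameters `(x', y', α, β)`. -/
def eAffine (x' y' : X →L[ℝ] ℝ) (α β : ℝ) : X → EReal :=
  fun x => if y' x < α then ((x' x - β : ℝ) : EReal) else ⊤

/-- A function is e-affine if it equals `eAffine x' y' α β` for some parameters. -/
def IsEAffine (a : X → EReal) : Prop :=
  ∃ x' y' α β, a = eAffine x' y' α β

/-- The set `Ẽ_{f₁,f₂}` of e-affine functions obtained by adding the parameters of an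
e-affine minorant of `f₁` and one of `f₂`. -/
def ETilde (f₁ f₂ : X → EReal) : Set (X → EReal) :=
  {a | ∃ x₁ y₁ : X →L[ℝ] ℝ, ∃ α₁ β₁ : ℝ, ∃ x₂ y₂ : X →L[ℝ] ℝ, ∃ α₂ β₂ : ℝ,
    eAffine x₁ y₁ α₁ β₁ ≤ f₁ ∧ eAffine x₂ y₂ α₂ β₂ ≤ f₂ ∧
    a = eAffine (x₁ + x₂) (y₁ + y₂) (α₁ + α₂) (β₁ + β₂)}

/-- The additivity condition (AC): `eco (f₁ + f₂) = sup {a : a ∈ Ẽ_{f₁,f₂}}`. -/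
def ACcond (f₁ f₂ : X → EReal) : Prop :=
  eco (fun x => f₁ x + f₂ x) = fun x => ⨆ a ∈ ETilde f₁ f₂, a x

/-- Infimal convolution of two functions on `W`. -/
def infConv (k₁ k₂ : Wsp X → EReal) : Wsp X → EReal :=
  fun w => ⨅ w' : Wsp X, k₁ w' + k₂ (w - w')

/-- The DC objective `f - g`, defined to be `+∞` outside `dom f`. -/
def dcDiff (f g : X → EReal) : X → EReal :=
  fun x => if f x = ⊤ then ⊤ else f x - g x

/-- `λh := Σ_{t∈T} λ_t h_t` for a nonnegative generalized finite sequence `λ`. -/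
def lamh {T : Type*} (lam : T →₀ ℝ) (h : T → X → EReal) : X → EReal :=
  fun x => ∑ t ∈ lam.support, ((lam t : ℝ) : EReal) * h t x

/-- The set `B := ∩_{λ∈ℝ^{(T)}_+} {x : (eco λh)(x) ≤ 0}`. -/
def Bset {T : Type*} (h : T → X → EReal) : Set X :=
  {x | ∀ lam : T →₀ ℝ, (∀ t, 0 ≤ lam t) → eco (lamh lam h) x ≤ 0}

/-- The set `K := ∪_{λ∈ℝ^{(T)}_+} epi (λh)^c`. -/
def Kset {T : Type*} (h : T → X → EReal) : Set (Wsp X × ℝ) :=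
  ⋃ lam ∈ {l : T →₀ ℝ | ∀ t, 0 ≤ l t}, epiE (cConj (lamh lam h))

/-! An `ε`-`c`-subgradient `w` of `f` at `x` is the same as an e-affine minorant of `f` with
parameters `w` that is `ε`-exact at `x`. E-affine functions are e-convex, so this minorant also lies
below `eco f ≤ f`; hence `eco f x` is finite, in `[f x - ε, f x]`, and lowering the value at `x` from
`f x` to `eco f x` keeps the minorant below `eco f`. -/

lemma EReal.sub_coe_sub_coe_le_sub_coe_iff (a b : EReal) (t ε r : ℝ) :
    a - t - ε ≤ b - r ↔ a - ((t + ε - r : ℝ) : EReal) ≤ b := by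
  induction a using EReal.rec <;> induction b using EReal.rec <;>
    simp only [EReal.bot_sub, EReal.top_sub_coe, ← EReal.coe_sub, EReal.coe_le_coe_iff, le_refl,
      bot_le, le_top, top_le_iff, le_bot_iff, EReal.coe_ne_top, EReal.coe_ne_bot, top_ne_bot]
  constructor <;> intro <;> linarith

lemma coupling_of_lt {x : X} {w : Wsp X} (h : w.2.1 x < w.2.2) :
    coupling x w = ((w.1 x : ℝ) : EReal) :=
  if_pos h

lemma eAffine_apply_eq_coupling_sub (w : Wsp X) (β : ℝ) (x : X) :
    eAffine w.1 w.2.1 w.2.2 β x = coupling x w - β := by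
  unfold eAffine coupling
  split_ifs <;> rfl

lemma eAffine_antitone (x' y' : X →L[ℝ] ℝ) (α : ℝ) : Antitone (eAffine x' y' α) := by
  intro β β' hβ x
  unfold eAffine
  split_ifs
  · exact EReal.coe_le_coe_iff.mpr (by linarith)
  · exact le_rfl

lemma mem_epiE_eAffine {x' y' : X →L[ℝ] ℝ} {α β : ℝ} {p : X × ℝ} :
    p ∈ epiE (eAffine x' y' α β) ↔ y' p.1 < α ∧ x' p.1 - β ≤ p.2 := by
  simp only [epiE, eAffine, Set.mem_ofPred_eq]
  split_ifs with h
  · simp only [h, true_and, EReal.coe_le_coe_iff]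
  · simp [h]

lemma eAffine_econvexFn (x' y' : X →L[ℝ] ℝ) (α β : ℝ) : EConvexFn (eAffine x' y' α β) := by
  intro p₀ hp₀
  rw [mem_epiE_eAffine, not_and_or, not_le] at hp₀
  rcases hp₀ with hout | hbelow
  · refine ⟨y'.comp (ContinuousLinearMap.fst ℝ X ℝ), fun p hp => ?_⟩
    change y' p.1 < y' p₀.1
    linarith [(mem_epiE_eAffine.1 hp).1]
  · refine ⟨x'.comp (ContinuousLinearMap.fst ℝ X ℝ) - ContinuousLinearMap.snd ℝ X ℝ,
      fun p hp => ?_⟩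
    change x' p.1 - p.2 < x' p₀.1 - p₀.2
    linarith [(mem_epiE_eAffine.1 hp).2]

lemma eco_le (f : X → EReal) : eco f ≤ f :=
  fun x => iSup_le fun g => g.2.2 x

lemma le_eco {f g : X → EReal} (hg : EConvexFn g) (hgf : g ≤ f) : g ≤ eco f :=
  fun x => le_iSup (fun g : {g : X → EReal // EConvexFn g ∧ g ≤ f} => g.1 x) ⟨g, hg, hgf⟩

lemma mem_cSubdiff_iff {f : X → EReal} {ε : ℝ} {xb : X} {r : ℝ} (hr : f xb = r) {w : Wsp X} :
    w ∈ cSubdiff f ε xb ↔ w.2.1 xb < w.2.2 ∧ eAffine w.1 w.2.1 w.2.2 (w.1 xb + ε - r) ≤ f := by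
  refine ⟨fun ⟨_, hlt, hw⟩ => ⟨hlt, fun z => ?_⟩, fun ⟨hlt, ha⟩ => ⟨⟨r, hr⟩, hlt, fun z => ?_⟩⟩
  · have := hw z
    rwa [hr, coupling_of_lt hlt, EReal.sub_coe_sub_coe_le_sub_coe_iff,
      ← eAffine_apply_eq_coupling_sub] at this
  · rw [hr, coupling_of_lt hlt, EReal.sub_coe_sub_coe_le_sub_coe_iff,
      ← eAffine_apply_eq_coupling_sub]
    exact ha z

theorem stmt1_general (f : X → EReal) (ε : ℝ) (x : X) :
    cSubdiff f ε x ⊆ cSubdiff (eco f) ε x := by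
  intro w hw
  obtain ⟨r, hr⟩ := hw.1
  obtain ⟨hlt, hminorant⟩ := (mem_cSubdiff_iff hr).1 hw
  have hle_eco := le_eco (eAffine_econvexFn _ _ _ _) hminorant
  have hlower : ((r - ε : ℝ) : EReal) ≤ eco f x := by
    have := hle_eco x
    rwa [eAffine_apply_eq_coupling_sub, coupling_of_lt hlt, ← EReal.coe_sub,
      show w.1 x - (w.1 x + ε - r) = r - ε by ring] at this
  have hupper : eco f x ≤ r := hr ▸ eco_le f x
  lift eco f x to ℝ using ⟨ne_top_of_le_ne_top (EReal.coe_ne_top r) hupper,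
    ne_bot_of_le_ne_bot (EReal.coe_ne_bot _) hlower⟩ with s hs
  refine (mem_cSubdiff_iff hs.symm).2 ⟨hlt, (eAffine_antitone _ _ _ ?_).trans hle_eco⟩
  linarith [EReal.coe_le_coe_iff.1 hupper]

/-- `∂_{c,ε} f(x) ⊆ ∂_{c,ε} (eco f)(x)`. -/
theorem stmt1 [IsTopologicalAddGroup X] [ContinuousSMul ℝ X] [LocallyConvexSpace ℝ X] [T2Space X]
    (f : X → EReal) (hf : ProperFn f) (ε : ℝ) (hε : 0 ≤ ε) (x : X) :
    cSubdiff f ε x ⊆ cSubdiff (eco f) ε x :=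
  stmt1_general f ε x

end
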